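/- Let S(k,ℓ) denote the Stirling numbers of the second kind. For all natural numbers k and ℓ with ℓ ≤ k, one has ℓ · S(k,ℓ) = ∑_{j=ℓ}^{k} C(k, j-1) · (-1)^{k-j} · S(j,ℓ), where C(n,r) is the binomial coefficient. -/

import Mathlib

/-!
Write `f_l n = S(n + 1, l + 1)`. By the recurrence of `S`, `Δ f_l n = l f_l n + S(n + 1, l)`, so the
numbers `Δ^k f_l 0` obey the same recurrence in `k` as `S(k, l)` and hence equal it. Expanding
`Δ^k` gives `∑_{i ≤ k} (-1)^(k-i) C(k,i) S(i+1, l+1) = S(k, l)`; the identity is this sum without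
its `i = k` term, combined with `S(k+1, l+1) = (l+1) S(k, l+1) + S(k, l)`.
-/

/-- Stirling numbers of the second kind. -/
def stirling2 : ℕ → ℕ → ℕ
  | 0, 0 => 1
  | 0, _ + 1 => 0
  | _ + 1, 0 => 0
  | k + 1, l + 1 => (l + 1) * stirling2 k (l + 1) + stirling2 k l

open Finset Nat fwdDiff

theorem stirling2_eq_stirlingSecond : stirling2 = stirlingSecond := by
  funext n k
  induction n generalizing k with
  | zero => cases k <;> rfl
  | succ n ih => cases k <;> simp [stirling2, stirlingSecond_succ_succ, ih]

theorem fwdDiff_stirlingSecond_succ (l : ℕ) :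
    Δ_[1] (fun n ↦ (stirlingSecond (n + 1) (l + 1) : ℤ)) =
      (l : ℤ) • (fun n ↦ (stirlingSecond (n + 1) (l + 1) : ℤ)) +
        fun n ↦ (stirlingSecond (n + 1) l : ℤ) := by
  ext n
  simp only [fwdDiff, stirlingSecond_succ_succ, Pi.add_apply, Pi.smul_apply, smul_eq_mul]
  push_cast
  ring

theorem fwdDiff_iter_stirlingSecond_succ_zero (k l : ℕ) :
    Δ_[1] ^[k] (fun n ↦ (stirlingSecond (n + 1) (l + 1) : ℤ)) 0 = stirlingSecond k l := by
  induction k generalizing l with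
  | zero => cases l <;> simp [stirlingSecond_succ_succ]
  | succ k ih =>
    rw [Function.iterate_succ_apply, fwdDiff_stirlingSecond_succ, fwdDiff_iter_add,
      fwdDiff_iter_const_smul, Pi.add_apply, Pi.smul_apply, ih, smul_eq_mul]
    cases l with
    | zero => simp [fwdDiff_iter_eq_sum_shift]
    | succ m => rw [ih, stirlingSecond_succ_succ]; push_cast; ring

theorem sum_neg_one_pow_mul_choose_mul_stirlingSecond_succ (k l : ℕ) :
    ∑ i ∈ range (k + 1), (-1 : ℤ) ^ (k - i) * k.choose i * stirlingSecond (i + 1) (l + 1) =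
      stirlingSecond k l := by
  rw [← fwdDiff_iter_stirlingSecond_succ_zero, fwdDiff_iter_eq_sum_shift]
  simp

theorem sum_range_choose_mul_stirlingSecond_succ (k m : ℕ) :
    ∑ i ∈ range k, (k.choose i : ℤ) * (-1) ^ (k - (i + 1)) * stirlingSecond (i + 1) (m + 1) =
      (m + 1) * stirlingSecond k (m + 1) := by
  have h := sum_neg_one_pow_mul_choose_mul_stirlingSecond_succ k m
  rw [sum_range_succ, choose_self, Nat.sub_self, stirlingSecond_succ_succ] at h
  have hsign : ∀ i ∈ range k,
      (k.choose i : ℤ) * (-1) ^ (k - (i + 1)) * stirlingSecond (i + 1) (m + 1) =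
        -((-1 : ℤ) ^ (k - i) * k.choose i * stirlingSecond (i + 1) (m + 1)) := by
    intro i hi
    rw [show k - i = k - (i + 1) + 1 by grind]
    ring
  rw [sum_congr rfl hsign, sum_neg_distrib]
  push_cast at h
  linarith

theorem stirling_sum_identity_general (k l : ℕ) :
    (l : ℤ) * stirling2 k l =
      ∑ j ∈ Finset.Icc l k,
        (if j = 0 then 0 else (k.choose (j - 1) : ℤ)) * (-1) ^ (k - j) * stirling2 j l := by
  rw [stirling2_eq_stirlingSecond]
  have extend : ∑ j ∈ Icc l k,
        (if j = 0 then 0 else (k.choose (j - 1) : ℤ)) * (-1) ^ (k - j) * stirlingSecond j l =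
      ∑ j ∈ range (k + 1),
        (if j = 0 then 0 else (k.choose (j - 1) : ℤ)) * (-1) ^ (k - j) * stirlingSecond j l := by
    refine sum_subset (fun j hj ↦ by grind) fun j _ hj ↦ ?_
    rw [stirlingSecond_eq_zero_of_lt (by grind)]
    simp
  rw [extend, sum_range_succ']
  cases l with
  | zero => simp
  | succ m => simpa using (sum_range_choose_mul_stirlingSecond_succ k m).symm

theorem stirling_sum_identity (k l : ℕ) (hlk : l ≤ k) :
    (l : ℤ) * stirling2 k l =
      ∑ j ∈ Finset.Icc l k,
        (if j = 0 then 0 else (k.choose (j - 1) : ℤ)) * (-1) ^ (k - j) * stirling2 j l :=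
  stirling_sum_identity_general k l
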